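/- Let s ≥ 5 be an integer and let λ be an s-minimal biliaison type with u_λ ≥ 3. Let f be the residue of d_λ modulo s, with 0 ≤ f < s. Then q_s(λ) ≥ 2s + m(f,s), where m(f,s) = f(s−1)(s−f) + 2s(f−2) if either 3 ≤ f ≤ s−f or f ∈ {s−2, s−1}, and m(f,s) = f(s−1)(s−f) + 2s(s−f−2) if either 3 ≤ s−f ≤ f or f ∈ {0, 1, 2}. Moreover, m(f,s) equals the minimum of q_s(μ) over all s-minimal biliaison types μ with u_μ = 2 and d_μ ≡ f or d_μ ≡ s−f modulo s; this minimum is attained by μ = (1, f−1) and its s-dual (s−f+1, s−1) in the first case, and by μ = (1, s−f−1) and its s-dual (f+1, s−1) in the second case. -/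

import Mathlib

/-- An `s`-minimal biliaison type: a strictly increasing finite sequence of
positive integers, all strictly less than `s` (the empty sequence is allowed). -/
def SMinimal (s : ℕ) (l : List ℕ) : Prop :=
  l.Chain' (· < ·) ∧ ∀ k ∈ l, 0 < k ∧ k < s

/-- The quadratic form `q_s(λ) = Σ_i k_i(s−1)(s−k_i) − 2 Σ_{i<j} k_i(s−k_j)`. -/
def qform (s : ℕ) (l : List ℕ) : ℤ :=
  (∑ i : Fin l.length, (l.get i : ℤ) * ((s : ℤ) - 1) * ((s : ℤ) - l.get i))
  - 2 * ∑ i : Fin l.length, ∑ j : Fin l.length,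
      if (i : ℕ) < (j : ℕ) then (l.get i : ℤ) * ((s : ℤ) - l.get j) else 0

/-- The `s`-dual `λ′ = (s−k_u, …, s−k_1)` of a biliaison type. -/
def sdual (s : ℕ) (l : List ℕ) : List ℕ := (l.map (fun k => s - k)).reverse

/-- The quantity `m(f,s)` of Proposition 8.7(b). -/
def mval (s f : ℕ) : ℤ :=
  if (3 ≤ f ∧ f ≤ s - f) ∨ f = s - 2 ∨ f = s - 1 then
    (f : ℤ) * ((s : ℤ) - 1) * ((s : ℤ) - f) + 2 * s * ((f : ℤ) - 2)
  else
    (f : ℤ) * ((s : ℤ) - 1) * ((s : ℤ) - f) + 2 * s * ((s : ℤ) - (f : ℤ) - 2)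

/-!
Write `λ = (a, …, b)` with `u ≥ 3` entries. Strict increase forces `b - a ≥ u - 1`, so replacing
the two extreme entries by the single entry `a + b` (or deleting both when `a + b = s`) keeps the
degree modulo `s` and lowers `q_s` by `2sa(b - u + 1) ≥ 2s`. The `s`-dual preserves `q_s` and
swaps the residues `f` and `s - f`, on which `m(·, s)` is symmetric, so we may assume `a + b ≤ s`.
Iterating ends at a pair, where `q_s(a, b) = g(s-1)(s-g) + 2s(g-2) + 2s(a-1)(b-2)` with
`g = a + b` dominates `m`, or, when `u = 3` and `a + b = s`, at a single entry, checked directly.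
-/

-- `qweight λ = Σ k_i² + 2 Σ_{i<j} k_i`, so that `q_s(λ) = d² + s((s-1)d - qweight λ)`.
def qweight : List ℕ → ℤ
  | [] => 0
  | a :: t => a * (a + 2 * t.length) + qweight t

lemma qweight_append (xs ys : List ℕ) :
    qweight (xs ++ ys) = qweight xs + 2 * ys.length * xs.sum + qweight ys := by
  induction xs with
  | nil => simp [qweight]
  | cons a t ih =>
    simp only [List.cons_append, qweight, ih, List.length_append, List.sum_cons]; push_cast; ring

lemma qform_cons (s a : ℕ) (t : List ℕ) :
    qform s (a :: t) =
      a * ((s : ℤ) - 1) * (s - a) - 2 * a * (s * t.length - t.sum) + qform s t := by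
  have hsum : ∑ j : Fin t.length, (a * ((s : ℤ) - t.get j)) = a * (s * t.length - t.sum) := by
    rw [← Finset.mul_sum, Finset.sum_sub_distrib, ← Fin.sum_univ_getElem t]
    simp [mul_comm]
  simp only [qform, List.length_cons, Fin.sum_univ_succ, List.get_cons_zero, Fin.val_zero,
    Fin.val_succ, List.get_cons_succ', Nat.not_lt_zero, if_false, Nat.zero_lt_succ, if_true,
    Nat.succ_lt_succ_iff, hsum]
  ring_nf

lemma qform_eq_sq_add_qweight (s : ℕ) (l : List ℕ) :
    qform s l = (l.sum : ℤ) ^ 2 + s * ((s - 1) * l.sum - qweight l) := by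
  induction l with
  | nil => simp [qform, qweight]
  | cons a t ih => rw [qform_cons, ih, qweight, List.sum_cons]; push_cast; ring

lemma qform_pair (s a b : ℕ) :
    qform s [a, b] =
      a * ((s : ℤ) - 1) * (s - a) + b * ((s : ℤ) - 1) * (s - b) - 2 * a * (s - b) := by
  simp only [qform_eq_sq_add_qweight, qweight, List.sum_cons, List.sum_nil, List.length_cons,
    List.length_nil]
  push_cast; ring

lemma qform_singleton (s k : ℕ) : qform s [k] = k * ((s : ℤ) - 1) * (s - k) := by
  simp only [qform_eq_sq_add_qweight, qweight, List.sum_cons, List.sum_nil, List.length_nil]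
  push_cast; ring

lemma qform_append_singleton (s c : ℕ) (xs : List ℕ) :
    qform s (xs ++ [c]) = qform s xs + c * ((s : ℤ) - 1) * (s - c) - 2 * (s - c) * xs.sum := by
  simp only [qform_eq_sq_add_qweight, qweight_append, qweight, List.sum_append, List.sum_cons,
    List.sum_nil, List.length_cons, List.length_nil]
  push_cast; ring

lemma qform_append_singleton_self (s : ℕ) (xs : List ℕ) : qform s (xs ++ [s]) = qform s xs := by
  simp [qform_append_singleton]

lemma qform_cons_append_singleton (s a b : ℕ) (xs : List ℕ) :
    qform s (a :: (xs ++ [b])) = qform s (xs ++ [a + b]) + 2 * s * a * (b - xs.length - 1) := by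
  simp only [qform_eq_sq_add_qweight, qweight_append, qweight, List.sum_append, List.sum_cons,
    List.sum_nil, List.length_cons, List.length_nil, List.length_append]
  push_cast; ring

section sdual

variable (s : ℕ)

lemma sdual_cons (a : ℕ) (t : List ℕ) : sdual s (a :: t) = sdual s t ++ [s - a] := by
  simp [sdual]

lemma sdual_cons_append_singleton (a b : ℕ) (xs : List ℕ) :
    sdual s (a :: (xs ++ [b])) = (s - b) :: (sdual s xs ++ [s - a]) := by
  simp [sdual]

@[simp]
lemma length_sdual (l : List ℕ) : (sdual s l).length = l.length := by
  simp [sdual]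

lemma sum_sdual_add_sum {l : List ℕ} (hl : ∀ k ∈ l, k ≤ s) :
    (sdual s l).sum + l.sum = s * l.length := by
  induction l with
  | nil => rfl
  | cons a t ih =>
    have ha := hl a (by simp)
    have := ih fun k hk => hl k (by simp [hk])
    simp only [sdual_cons, List.sum_append, List.sum_cons, List.sum_nil, List.length_cons]
    rw [Nat.mul_succ]
    omega

lemma qform_sdual {l : List ℕ} (hl : ∀ k ∈ l, k ≤ s) : qform s (sdual s l) = qform s l := by
  induction l with
  | nil => rfl
  | cons a t ih =>
    have ha := hl a (by simp)
    have ht : ∀ k ∈ t, k ≤ s := fun k hk => hl k (by simp [hk])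
    have hsum : ((sdual s t).sum : ℤ) = s * t.length - t.sum := by
      rw [eq_sub_iff_add_eq]; exact_mod_cast sum_sdual_add_sum s ht
    rw [sdual_cons, qform_append_singleton, ih ht, qform_cons, hsum]
    push_cast [ha]
    ring

end sdual

namespace SMinimal

variable {s : ℕ}

theorem iff_pairwise {l : List ℕ} :
    SMinimal s l ↔ l.Pairwise (· < ·) ∧ ∀ k ∈ l, 0 < k ∧ k < s :=
  and_congr_left' List.isChain_iff_pairwise

theorem sublist {l₁ l₂ : List ℕ} (h : SMinimal s l₂) (h₁₂ : l₁.Sublist l₂) : SMinimal s l₁ := by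
  rw [iff_pairwise] at h ⊢
  exact ⟨h.1.sublist h₁₂, fun k hk => h.2 k (h₁₂.subset hk)⟩

theorem sdual {l : List ℕ} (h : SMinimal s l) : SMinimal s (sdual s l) := by
  rw [iff_pairwise] at h ⊢
  refine ⟨?_, ?_⟩
  · rw [_root_.sdual, List.pairwise_reverse, List.pairwise_map]
    refine h.1.imp_of_mem fun ha hb hab => ?_
    have := h.2 _ hb
    omega
  · simp only [_root_.sdual, List.mem_reverse, List.mem_map]
    rintro _ ⟨k, hk, rfl⟩
    have := h.2 k hk
    omega

theorem append_singleton_of_le {xs : List ℕ} {b c : ℕ} (h : SMinimal s (xs ++ [b])) (hbc : b ≤ c)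
    (hc : c < s) : SMinimal s (xs ++ [c]) := by
  rw [iff_pairwise] at h ⊢
  simp only [List.pairwise_append, List.mem_singleton, List.mem_append] at h ⊢
  refine ⟨⟨h.1.1, List.pairwise_singleton _ _, fun x hx y hy => ?_⟩, fun k hk => ?_⟩
  · have := h.1.2.2 x hx b rfl
    omega
  · rcases hk with hk | rfl
    · exact h.2 k (Or.inl hk)
    · have := h.2 b (Or.inr rfl)
      omega

theorem add_length_lt (a b : ℕ) (xs : List ℕ) (h : SMinimal s (a :: (xs ++ [b]))) :
    a + xs.length < b := by
  induction xs generalizing a with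
  | nil => simpa using (iff_pairwise.mp h).1
  | cons x xs ih =>
    have hax : a < x := List.rel_of_pairwise_cons (iff_pairwise.mp h).1 (by simp)
    have := ih x (h.sublist (List.sublist_cons_self _ _))
    simp only [List.length_cons]
    omega

end SMinimal

section mval

variable {s f : ℕ}

lemma mval_le {c : ℕ} (hfc : f ≤ c) (h : 3 ≤ f ∨ s - f ≤ c) :
    mval s f ≤ f * ((s : ℤ) - 1) * (s - f) + 2 * s * ((c : ℤ) - 2) := by
  unfold mval
  split_ifs with hcond
  · have : (f : ℤ) ≤ c := by exact_mod_cast hfc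
    nlinarith
  · have : (s : ℤ) - f ≤ c := by omega
    nlinarith

lemma mval_sub (hs : 5 ≤ s) (hf0 : 0 < f) (hfs : f < s) : mval s (s - f) = mval s f := by
  unfold mval
  push_cast [hfs.le]
  split_ifs with h₁ h₂ h₂
  · have hs2f : (s : ℤ) = 2 * f := by omega
    linear_combination 2 * (s : ℤ) * hs2f
  · ring
  · ring
  · omega

lemma mval_mod_eq_of_dvd_add {x y : ℕ} (hs : 5 ≤ s) (h : s ∣ x + y) :
    mval s (x % s) = mval s (y % s) := by
  have hx := Nat.mod_lt x (by omega : 0 < s)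
  have hy := Nat.mod_lt y (by omega : 0 < s)
  have hmod : (x % s + y % s) % s = 0 := by rw [← Nat.add_mod]; exact Nat.mod_eq_zero_of_dvd h
  rcases lt_or_ge (x % s + y % s) s with hlt | hge
  · rw [Nat.mod_eq_of_lt hlt] at hmod
    rw [show x % s = y % s by omega]
  · rw [Nat.mod_eq_sub_mod hge, Nat.mod_eq_of_lt (by omega)] at hmod
    rw [show x % s = s - y % s by omega, mval_sub hs (by omega) hy]

lemma mval_eq_of_sub (hs : 5 ≤ s) (hfs : f < s)
    (h : (3 ≤ s - f ∧ s - f ≤ f) ∨ f = 0 ∨ f = 1 ∨ f = 2) :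
    mval s f = (s - f : ℕ) * ((s : ℤ) - 1) * (s - (s - f : ℕ)) + 2 * s * ((s - f : ℕ) - 2 : ℤ) := by
  unfold mval
  push_cast [hfs.le]
  split_ifs with hcond
  · have hs2f : (s : ℤ) = 2 * f := by omega
    linear_combination -2 * (s : ℤ) * hs2f
  · ring

end mval

lemma List.exists_eq_cons_append_singleton {α : Type*} {l : List α} (h : 2 ≤ l.length) :
    ∃ a xs b, l = a :: (xs ++ [b]) := by
  match l, h with
  | a :: t, h =>
    have ht : t ≠ [] := by rintro rfl; simp at h
    exact ⟨a, t.dropLast, t.getLast ht, by rw [List.dropLast_append_getLast]⟩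

section bounds

variable {s : ℕ}

theorem add_mval_le_qform_of_head_add_last_le (hs : 5 ≤ s) (g : ℤ) {l : List ℕ}
    (hl : SMinimal s l) (hlen : 2 ≤ l.length)
    (h : ∀ a xs b, SMinimal s (a :: (xs ++ [b])) → xs.length + 2 = l.length → a + b ≤ s →
      g + mval s ((a :: (xs ++ [b])).sum % s) ≤ qform s (a :: (xs ++ [b]))) :
    g + mval s (l.sum % s) ≤ qform s l := by
  obtain ⟨a, xs, b, rfl⟩ := List.exists_eq_cons_append_singleton hlen
  have hlen' : xs.length + 2 = (a :: (xs ++ [b])).length := by simp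
  rcases le_or_gt (a + b) s with hab | hab
  · exact h a xs b hl hlen' hab
  have hle : ∀ k ∈ a :: (xs ++ [b]), k ≤ s := fun k hk => (hl.2 k hk).2.le
  have ha := hl.2 a (by simp)
  have hb := hl.2 b (by simp)
  have hdual := h (s - b) (sdual s xs) (s - a)
    (sdual_cons_append_singleton s a b xs ▸ hl.sdual) (by simp) (by omega)
  rwa [← sdual_cons_append_singleton, qform_sdual s hle,
    mval_mod_eq_of_dvd_add hs (Dvd.intro _ (sum_sdual_add_sum s hle).symm)] at hdual

theorem mval_le_qform_pair (hs : 5 ≤ s) {a b : ℕ} (h : SMinimal s [a, b]) :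
    mval s ([a, b].sum % s) ≤ qform s [a, b] := by
  simpa using add_mval_le_qform_of_head_add_last_le hs 0 h le_rfl fun a xs b hmin hlen hab => by
    obtain rfl : xs = [] := List.eq_nil_of_length_eq_zero (by simpa using hlen)
    have hab' : a < b := by simpa using hmin.add_length_lt a b []
    have ha := hmin.2 a (by simp)
    have hsum : mval s ((a + b) % s) ≤
        (a + b) * ((s : ℤ) - 1) * (s - (a + b)) + 2 * s * ((a + b : ℤ) - 2) := by
      rcases hab.lt_or_eq with hlt | heq
      · rw [Nat.mod_eq_of_lt hlt]
        have := mval_le (s := s) (c := a + b) le_rfl (Or.inl (by omega))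
        push_cast at this ⊢
        linarith
      · have hcast : (a : ℤ) + b = s := by exact_mod_cast heq
        rw [heq, Nat.mod_self, hcast]
        simpa using mval_le (s := s) (f := 0) (c := s) (by omega) (Or.inr le_rfl)
    have hcorr : 0 ≤ 2 * (s : ℤ) * ((a : ℤ) - 1) * ((b : ℤ) - 2) := by
      have : (1 : ℤ) ≤ a := by exact_mod_cast ha.1
      have : (2 : ℤ) ≤ b := by omega
      positivity
    simp only [List.nil_append, List.sum_cons, List.sum_nil, add_zero, zero_add, qform_pair]
    nlinarith

theorem two_mul_add_mval_le_qform_triple {a k b : ℕ} (h : SMinimal s [a, k, b]) (hab : a + b = s) :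
    2 * s + mval s ([a, k, b].sum % s) ≤ qform s [a, k, b] := by
  obtain ⟨⟨hak, -⟩, hkb⟩ : (a < k ∧ a < b) ∧ k < b := by simpa using (SMinimal.iff_pairwise.mp h).1
  have ha := h.2 a (by simp)
  have hres : [a, k, b].sum % s = k := by
    rw [show [a, k, b].sum = k + s by simp only [List.sum_cons, List.sum_nil]; omega,
      Nat.add_mod_right, Nat.mod_eq_of_lt (by omega)]
  have hm := mval_le (s := s) (f := k) (c := s - a - 1) (by omega) (Or.inr (by omega))
  have hcorr : 0 ≤ 2 * (s : ℤ) * ((a : ℤ) - 1) * ((s : ℤ) - a - 2) := by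
    have : (1 : ℤ) ≤ a := by exact_mod_cast ha.1
    have : (a : ℤ) + 2 ≤ s := by omega
    have : (0 : ℤ) ≤ (s : ℤ) - a - 2 := by omega
    positivity
  have hq : qform s [a, k, b] = k * ((s : ℤ) - 1) * (s - k) + 2 * s * a * (b - 2) := by
    have := qform_cons_append_singleton s a b [k]
    rw [hab, qform_append_singleton_self, qform_singleton] at this
    rw [show [a, k, b] = a :: ([k] ++ [b]) from rfl, this]
    push_cast [List.length_singleton]
    ring
  have hb : (b : ℤ) = s - a := by omega
  have hc : ((s - a - 1 : ℕ) : ℤ) = s - a - 1 := by omega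
  rw [hc] at hm
  rw [hq, hres, hb]
  nlinarith

theorem two_mul_add_mval_le_qform (hs : 5 ≤ s) (l : List ℕ) (hl : SMinimal s l)
    (hlen : 3 ≤ l.length) : 2 * s + mval s (l.sum % s) ≤ qform s l := by
  induction hn : l.length using Nat.strong_induction_on generalizing l with
  | _ n ih =>
  have hshort : ∀ l', SMinimal s l' → 2 ≤ l'.length → l'.length < n →
      mval s (l'.sum % s) ≤ qform s l' := by
    intro l' hl' h2 hlt
    rcases h2.eq_or_lt with h2 | h3
    · obtain ⟨a, b, rfl⟩ := List.length_eq_two.mp h2.symm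
      exact mval_le_qform_pair hs hl'
    · linarith [ih _ hlt l' hl' h3 rfl]
  refine add_mval_le_qform_of_head_add_last_le hs _ hl (by omega) fun a xs b hmin hlen' hab => ?_
  have hgap := hmin.add_length_lt
  have ha := hmin.2 a (by simp)
  have hstep : 2 * (s : ℤ) ≤ 2 * s * a * (b - xs.length - 1) := by
    have : (1 : ℤ) ≤ a := by exact_mod_cast ha.1
    have : (a : ℤ) ≤ b - xs.length - 1 := by omega
    have : (1 : ℤ) ≤ a * (b - xs.length - 1) := by nlinarith
    nlinarith [mul_le_mul_of_nonneg_left this (by positivity : (0 : ℤ) ≤ 2 * s)]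
  rcases hab.lt_or_eq with hlt | heq
  · have hmerge : SMinimal s (xs ++ [a + b]) :=
      (hmin.sublist (List.sublist_cons_self _ _)).append_singleton_of_le (by omega) hlt
    have hsum : (a :: (xs ++ [b])).sum = (xs ++ [a + b]).sum := by
      simp only [List.sum_cons, List.sum_append, List.sum_nil]; omega
    have := hshort _ hmerge (by simp only [List.length_append, List.length_singleton]; omega)
      (by simp only [List.length_append, List.length_singleton]; omega)
    rw [qform_cons_append_singleton, hsum]
    linarith
  · obtain hone | htwo : xs.length = 1 ∨ 2 ≤ xs.length := by omega
    · obtain ⟨k, rfl⟩ := List.length_eq_one_iff.mp hone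
      exact two_mul_add_mval_le_qform_triple hmin heq
    have hxs : SMinimal s xs := hmin.sublist ((List.sublist_append_left xs [b]).cons a)
    have hres : (a :: (xs ++ [b])).sum % s = xs.sum % s := by
      rw [show (a :: (xs ++ [b])).sum = xs.sum + s by
        simp only [List.sum_cons, List.sum_append, List.sum_nil]; omega, Nat.add_mod_right]
    have := hshort xs hxs htwo (by omega)
    rw [qform_cons_append_singleton, heq, qform_append_singleton_self, hres]
    linarith

end bounds

theorem pair_one_pred_spec {s g : ℕ} {m : ℤ} (hg : 3 ≤ g) (hgs : g ≤ s)
    (hm : m = g * ((s : ℤ) - 1) * (s - g) + 2 * s * ((g : ℤ) - 2)) :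
    SMinimal s [1, g - 1] ∧ qform s [1, g - 1] = m ∧ sdual s [1, g - 1] = [s - g + 1, s - 1] ∧
      SMinimal s [s - g + 1, s - 1] ∧ qform s [s - g + 1, s - 1] = m := by
  have hmin : SMinimal s [1, g - 1] := ⟨List.isChain_pair.mpr (by omega), fun k hk => by
    simp only [List.mem_cons, List.not_mem_nil, or_false] at hk; omega⟩
  have hq : qform s [1, g - 1] = m := by
    rw [qform_pair, hm]; push_cast [show 1 ≤ g by omega]; ring
  have hdual : sdual s [1, g - 1] = [s - g + 1, s - 1] := by
    simp only [sdual, List.map_cons, List.map_nil, List.reverse_cons, List.reverse_nil,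
      List.nil_append, List.cons_append, List.cons.injEq, and_true]
    omega
  refine ⟨hmin, hq, hdual, hdual ▸ hmin.sdual, ?_⟩
  rw [← hdual, qform_sdual s fun k hk => (hmin.2 k hk).2.le, hq]

/-- Proposition 8.7(b): if `u_λ ≥ 3` and `s ≥ 5` then `q_s(λ) ≥ 2s + m(f,s)`, where
`m(f,s)` is the minimum of `q_s(μ)` over two-term `s`-minimal types `μ` of degree
`≡ f` or `≡ s−f (mod s)`, attained by `(1,f−1)` and its `s`-dual `(s−f+1,s−1)` in the
first case, and by `(1,s−f−1)` and its `s`-dual `(f+1,s−1)` in the second case. -/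
theorem stmt7 (s : ℕ) (hs : 5 ≤ s) (l : List ℕ) (hl : SMinimal s l) (hu : 3 ≤ l.length)
    (f : ℕ) (hf : f = l.sum % s) :
    2 * (s : ℤ) + mval s f ≤ qform s l ∧
    (∀ μ : List ℕ, SMinimal s μ → μ.length = 2 →
      (μ.sum % s = f ∨ μ.sum % s = (s - f) % s) → mval s f ≤ qform s μ) ∧
    (((3 ≤ f ∧ f ≤ s - f) ∨ f = s - 2 ∨ f = s - 1) →
      SMinimal s [1, f - 1] ∧ qform s [1, f - 1] = mval s f ∧
      sdual s [1, f - 1] = [s - f + 1, s - 1] ∧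
      SMinimal s [s - f + 1, s - 1] ∧ qform s [s - f + 1, s - 1] = mval s f) ∧
    (((3 ≤ s - f ∧ s - f ≤ f) ∨ f = 0 ∨ f = 1 ∨ f = 2) →
      SMinimal s [1, s - f - 1] ∧ qform s [1, s - f - 1] = mval s f ∧
      sdual s [1, s - f - 1] = [f + 1, s - 1] ∧
      SMinimal s [f + 1, s - 1] ∧ qform s [f + 1, s - 1] = mval s f) := by
  have hfs : f < s := hf ▸ Nat.mod_lt _ (by omega)
  refine ⟨hf ▸ two_mul_add_mval_le_qform hs l hl hu, fun μ hμ hμlen hres => ?_,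
    fun hcond => pair_one_pred_spec (by omega) hfs.le (if_pos hcond), fun hcond => ?_⟩
  · obtain ⟨a, b, rfl⟩ := List.length_eq_two.mp hμlen
    have hsymm : mval s ([a, b].sum % s) = mval s f := by
      rcases hres with hres | hres
      · rw [hres]
      · rw [hres, mval_mod_eq_of_dvd_add (x := s - f) (y := f) hs (Dvd.intro 1 (by omega)),
          Nat.mod_eq_of_lt hfs]
    exact hsymm ▸ mval_le_qform_pair hs hμ
  · simpa [Nat.sub_sub_self hfs.le] using
      pair_one_pred_spec (s := s) (g := s - f) (by omega) (by omega) (mval_eq_of_sub hs hfs hcond)
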